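/- arXiv:2004.14873 — 2 statements merged into one kernel-verified Lean document; each statement's English description precedes it below -/
import Mathlib

section
/- Let m, n be coprime positive integers. An affine permutation ω is m-stable if and only if ω^{-1} has the form ω^{-1}(i) = −n·a_i + m·(g_a(i) − 1) for i = 1,...,n, for some vector a ∈ ℤ^n satisfying: (i) a_i − a_j ≤ m for all i, j, and (ii) whenever a_i − a_j = m one has i < j. Here g_a is the minimal-length permutation sorting a in non-decreasing order. -/
/-!
Since `m` and `n` are coprime, every integer is uniquely `-n * A + m * c` with `0 ≤ c < n`, and
adding `m` moves `(A, c)` to `(A, c + 1)`, or `(A, n - 1)` to `(A - m, 0)`.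
If `ω (-n * a i + m * b i) = i + 1`, periodicity gives
`ω (-n * A + m * b i) = n * a i + i + 1 - n * A`.
Hence `ω` is `m`-stable exactly when `b` increases along the keys `n * a i + i`, i.e. `b i` is their
rank `g_a(i) - 1`, and the wrap-around step increases as well, i.e. all keys lie in a window of
length `n * m`; the latter is conditions (i) and (ii).
-/

def gvalZ (n : ℕ) (a : Fin n → ℤ) (i : Fin n) : ℕ :=
  (Finset.univ.filter fun j => a j < a i).card +
  (Finset.univ.filter fun j => j ≤ i ∧ a j = a i).card

section Periodic

theorem map_add_mul_of_map_add {ω : ℤ → ℤ} {c : ℤ} (h : ∀ x, ω (x + c) = ω x + c) (x k : ℤ) :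
    ω (x + k * c) = ω x + k * c := by
  simpa using AddConstMapClass.map_add_zsmul (⟨ω, h⟩ : AddConstMap ℤ ℤ c c) x k

theorem map_neg_mul_add_of_map_add {ω : ℤ → ℤ} {n : ℤ} (h : ∀ x, ω (x + n) = ω x + n)
    (A a c : ℤ) : ω (-n * A + c) = ω (-n * a + c) + n * (a - A) := by
  rw [show -n * A + c = -n * a + c + (a - A) * n by ring, map_add_mul_of_map_add h]
  ring

theorem lt_map_add_mul_of_lt_map_add {ω : ℤ → ℤ} {m : ℤ} (h : ∀ x, ω x < ω (x + m)) (x : ℤ)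
    {k : ℕ} (hk : 0 < k) : ω x < ω (x + k * m) := by
  have hmono : StrictMono fun k : ℕ => ω (x + k * m) :=
    strictMono_nat_of_lt_succ fun k => by simpa [add_mul, add_assoc] using h (x + k * m)
  simpa using hmono hk

end Periodic

theorem Int.exists_eq_neg_mul_add_mul {m n : ℕ} (hco : Nat.Coprime m n) (hn : 0 < n) (y : ℤ) :
    ∃ (A : ℤ) (c : ℕ), c < n ∧ y = -n * A + m * c := by
  obtain ⟨u, v, huv⟩ := Nat.isCoprime_iff_coprime.mpr hco
  have hn' : (0 : ℤ) < n := by exact_mod_cast hn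
  have hr₀ := Int.emod_nonneg (u * y) hn'.ne'
  have hr₁ := Int.emod_lt_of_pos (u * y) hn'
  refine ⟨-(v * y + m * (u * y / n)), (u * y % n).toNat, by omega, ?_⟩
  rw [Int.toNat_of_nonneg hr₀]
  linear_combination (-y) * huv - m * Int.mul_ediv_add_emod (u * y) n

theorem Int.mul_add_lt_mul_add_iff {n q q' r r' : ℤ} (hr₀ : 0 ≤ r) (hr : r < n) (hr'₀ : 0 ≤ r')
    (hr' : r' < n) : n * q + r < n * q' + r' ↔ q < q' ∨ q = q' ∧ r < r' := by
  constructor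
  · intro h
    rcases lt_trichotomy q q' with hq | rfl | hq
    · exact Or.inl hq
    · exact Or.inr ⟨rfl, by linarith⟩
    · nlinarith
  · rintro (hq | ⟨rfl, h⟩)
    · nlinarith
    · linarith

section Rank

open Finset

variable {ι α : Type*} [Fintype ι] [LinearOrder α] (K : ι → α)

def rank (i : ι) : ℕ := #{j | K j < K i}

theorem rank_lt_card (i : ι) : rank K i < Fintype.card ι :=
  card_lt_card (filter_ssubset.2 ⟨i, mem_univ i, lt_irrefl _⟩)

variable {K}

theorem rank_lt_rank {i j : ι} (h : K i < K j) : rank K i < rank K j :=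
  card_lt_card <| (ssubset_iff_of_subset fun k hk => by
    simp only [mem_filter, mem_univ, true_and] at hk ⊢
    exact hk.trans h).2 ⟨i, by simpa using h, by simp⟩

theorem rank_lt_rank_iff (hK : Function.Injective K) {i j : ι} :
    rank K i < rank K j ↔ K i < K j := by
  refine ⟨fun h => ?_, rank_lt_rank⟩
  rcases lt_trichotomy (K i) (K j) with hlt | heq | hgt
  · exact hlt
  · exact absurd (congrArg (rank K) (hK heq)) h.ne
  · exact absurd (rank_lt_rank hgt) (lt_asymm h)

theorem rank_injective (hK : Function.Injective K) : Function.Injective (rank K) := by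
  intro i j h
  by_contra hij
  rcases (hK.ne hij).lt_or_gt with hlt | hgt
  · exact (rank_lt_rank hlt).ne h
  · exact (rank_lt_rank hgt).ne' h

theorem exists_rank_eq (hK : Function.Injective K) {c : ℕ} (hc : c < Fintype.card ι) :
    ∃ i, rank K i = c := by
  let r : ι → Fin (Fintype.card ι) := fun i => ⟨rank K i, rank_lt_card K i⟩
  have hr : Function.Bijective r := (Fintype.bijective_iff_injective_and_card r).2
    ⟨fun i j h => rank_injective hK (congrArg Fin.val h), by simp⟩
  obtain ⟨i, hi⟩ := hr.2 ⟨c, hc⟩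
  exact ⟨i, congrArg Fin.val hi⟩

theorem card_filter_le_eq_rank_add_one [DecidableEq ι] (hK : Function.Injective K) (i : ι) :
    #{j | K j ≤ K i} = rank K i + 1 := by
  have hset : (univ.filter fun j => K j ≤ K i) = insert i (univ.filter fun j => K j < K i) := by
    ext j
    simp [le_iff_lt_or_eq, hK.eq_iff, or_comm]
  rw [hset, card_insert_of_notMem (by simp), rank]

theorem eq_rank_of_lt_imp_lt (e : ι → ℕ) (he : Function.Injective e)
    (hlt : ∀ i, e i < Fintype.card ι) (hmono : ∀ i j, e i < e j → K i < K j) : e = rank K := by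
  funext i
  let e' : ι → Fin (Fintype.card ι) := fun i => ⟨e i, hlt i⟩
  have he' : Function.Bijective e' := (Fintype.bijective_iff_injective_and_card e').2
    ⟨fun i j h => he (congrArg Fin.val h), by simp⟩
  have hset : (univ.filter fun j => K j < K i) = univ.filter fun j => e j < e i := by
    ext j
    simp only [mem_filter, mem_univ, true_and]
    refine ⟨fun h => lt_of_not_ge fun hle => ?_, hmono j i⟩
    rcases hle.lt_or_eq with hlt' | heq
    · exact lt_asymm h (hmono i j hlt')
    · rw [he heq] at h; exact lt_irrefl _ h
  rw [rank, hset, card_bijective e' he' (t := Iio (e' i)) (fun j => by simp [e', Fin.lt_def]),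
    Fin.card_Iio]

end Rank

section SortKey

variable {n : ℕ}

/-- Sorting by `sortKey a` is sorting by `a`, ties broken by the index. -/
def sortKey (a : Fin n → ℤ) (i : Fin n) : ℤ := n * a i + i

theorem sortKey_add_mul_lt_sortKey_add_mul_iff (a : Fin n → ℤ) (i j : Fin n) (p q : ℤ) :
    sortKey a i + n * p < sortKey a j + n * q ↔ a i + p < a j + q ∨ a i + p = a j + q ∧ i < j := by
  have hi : (i : ℤ) < n := by exact_mod_cast i.isLt
  have hj : (j : ℤ) < n := by exact_mod_cast j.isLt
  rw [sortKey, sortKey, show (n : ℤ) * a i + i + n * p = n * (a i + p) + i by ring,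
    show (n : ℤ) * a j + j + n * q = n * (a j + q) + j by ring,
    Int.mul_add_lt_mul_add_iff (by positivity) hi (by positivity) hj, Fin.lt_def, Nat.cast_lt]

theorem sortKey_lt_sortKey_iff (a : Fin n → ℤ) (i j : Fin n) :
    sortKey a i < sortKey a j ↔ a i < a j ∨ a i = a j ∧ i < j := by
  simpa using sortKey_add_mul_lt_sortKey_add_mul_iff a i j 0 0

theorem sortKey_injective (a : Fin n → ℤ) : Function.Injective (sortKey a) := by
  intro i j h
  have h₁ := (sortKey_lt_sortKey_iff a i j).not.1 h.not_lt
  have h₂ := (sortKey_lt_sortKey_iff a j i).not.1 h.symm.not_lt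
  push Not at h₁ h₂
  exact le_antisymm (h₂.2 (le_antisymm h₁.1 h₂.1)) (h₁.2 (le_antisymm h₂.1 h₁.1))

theorem gvalZ_eq_rank_add_one (a : Fin n → ℤ) (i : Fin n) :
    gvalZ n a i = rank (sortKey a) i + 1 := by
  rw [← card_filter_le_eq_rank_add_one (sortKey_injective a), gvalZ,
    ← Finset.card_union_of_disjoint (Finset.disjoint_filter.2 fun j _ h h' => h.ne h'.2),
    ← Finset.filter_or]
  congr 1
  ext j
  simp only [Finset.mem_filter, Finset.mem_univ, true_and, le_iff_lt_or_eq,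
    sortKey_lt_sortKey_iff, (sortKey_injective a).eq_iff]
  constructor
  · rintro (h | ⟨h | rfl, h'⟩)
    exacts [Or.inl (Or.inl h), Or.inl (Or.inr ⟨h', h⟩), Or.inr rfl]
  · rintro ((h | ⟨h', h⟩) | rfl)
    exacts [Or.inl h, Or.inr ⟨Or.inl h, h'⟩, Or.inr ⟨Or.inr rfl, rfl⟩]

theorem sortKey_lt_add_mul_iff (a : Fin n → ℤ) (m : ℕ) :
    (∀ i j, sortKey a j < sortKey a i + n * m) ↔
      (∀ i j, a i - a j ≤ m) ∧ (∀ i j, a i - a j = m → i < j) := by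
  have key := fun i j => by simpa using sortKey_add_mul_lt_sortKey_add_mul_iff a j i 0 m
  simp only [key]
  constructor
  · intro h
    refine ⟨fun i j => ?_, fun i j hij => ?_⟩ <;> rcases h j i with h | ⟨h, h'⟩ <;> omega
  · rintro ⟨h, h'⟩ i j
    rcases (h j i).lt_or_eq with hlt | heq
    · left; omega
    · exact Or.inr ⟨by omega, h' j i heq⟩

end SortKey

section Stability

variable {m n : ℕ} {ω : ℤ → ℤ}

theorem stable_iff_sortKey_lt_add_mul (hco : Nat.Coprime m n) (hn : 0 < n)
    (hper : ∀ x, ω (x + n) = ω x + n) {a : Fin n → ℤ}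
    (ha : ∀ i, ω (-n * a i + m * rank (sortKey a) i) = i + 1) :
    (∀ x, ω x < ω (x + m)) ↔ ∀ i j, sortKey a j < sortKey a i + n * m := by
  have hK := sortKey_injective a
  have hmap : ∀ (A : ℤ) i, ω (-n * A + m * rank (sortKey a) i) = sortKey a i + 1 - n * A := by
    intro A i
    rw [map_neg_mul_add_of_map_add hper A (a i), ha, sortKey]
    ring
  have hcard : Fintype.card (Fin n) = n := Fintype.card_fin n
  constructor
  · intro hst i j
    obtain ⟨i₀, hi₀⟩ := exists_rank_eq hK (c := 0) (by omega)
    obtain ⟨j₀, hj₀⟩ := exists_rank_eq hK (c := n - 1) (by omega)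
    have hwrap : sortKey a j₀ < sortKey a i₀ + n * m := by
      have h := hst (-n * a j₀ + m * rank (sortKey a) j₀)
      rw [show -n * a j₀ + m * rank (sortKey a) j₀ + m = -n * (a j₀ - m) + m * rank (sortKey a) i₀
        by rw [hi₀, hj₀, Nat.cast_sub hn]; ring, hmap, hmap] at h
      linarith
    have hj : sortKey a j ≤ sortKey a j₀ :=
      not_lt.1 fun h => by have := rank_lt_rank h; have := rank_lt_card (sortKey a) j; omega
    have hi : sortKey a i₀ ≤ sortKey a i :=
      not_lt.1 fun h => by have := rank_lt_rank h; omega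
    linarith
  · intro hspread y
    obtain ⟨A, c, hc, rfl⟩ := Int.exists_eq_neg_mul_add_mul hco hn y
    obtain ⟨i, rfl⟩ := exists_rank_eq hK (hcard.symm ▸ hc)
    rw [hmap]
    rcases (Nat.succ_le_of_lt hc).lt_or_eq with hlt | heq
    · obtain ⟨j, hj⟩ := exists_rank_eq hK (c := rank (sortKey a) i + 1) (by omega)
      rw [show -n * A + m * rank (sortKey a) i + m = -n * A + m * rank (sortKey a) j
        by rw [hj]; push_cast; ring, hmap]
      have := (rank_lt_rank_iff hK).1 (by omega : rank (sortKey a) i < rank (sortKey a) j)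
      linarith
    · obtain ⟨j, hj⟩ := exists_rank_eq hK (c := 0) (by omega)
      have heq' : (rank (sortKey a) i : ℤ) + 1 = n := by exact_mod_cast heq
      rw [show -n * A + m * rank (sortKey a) i + m = -n * (A - m) + m * rank (sortKey a) j
        by rw [hj]; linear_combination m * heq', hmap]
      linarith [hspread j i]

theorem exists_sortKey_of_stable (hco : Nat.Coprime m n) (hn : 0 < n)
    (hper : ∀ x, ω (x + n) = ω x + n) (hsurj : Function.Surjective ω)
    (hst : ∀ x, ω x < ω (x + m)) :
    ∃ a : Fin n → ℤ, ∀ i, ω (-n * a i + m * rank (sortKey a) i) = i + 1 := by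
  have hcoord : ∀ i : Fin n, ∃ (A : ℤ) (c : ℕ), c < n ∧ ω (-n * A + m * c) = i + 1 := by
    intro i
    obtain ⟨y, hy⟩ := hsurj (i + 1)
    obtain ⟨A, c, hc, rfl⟩ := Int.exists_eq_neg_mul_add_mul hco hn y
    exact ⟨A, c, hc, hy⟩
  choose a b hb hab using hcoord
  have hshift : ∀ i j, ω (-n * a j + m * b i) = sortKey a i + 1 - n * a j := by
    intro i j
    rw [map_neg_mul_add_of_map_add hper (a j) (a i), hab, sortKey]
    ring
  have hinj : Function.Injective b := by
    intro i j h
    have := hshift i j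
    rw [h, hab] at this
    exact sortKey_injective a (by simp only [sortKey] at this ⊢; linarith)
  have hmono : ∀ i j, b i < b j → sortKey a i < sortKey a j := by
    intro i j h
    have := lt_map_add_mul_of_lt_map_add hst (-n * a i + m * b i) (k := b j - b i) (by omega)
    rw [show -n * a i + m * b i + ((b j - b i : ℕ) : ℤ) * m = -n * a i + m * b j
      by push_cast [h.le]; ring, hab, hshift] at this
    simp only [sortKey] at this ⊢
    linarith
  obtain rfl := eq_rank_of_lt_imp_lt b hinj (by simpa using hb) hmono
  exact ⟨a, hab⟩

end Stability

theorem stmt_4_general (m n : ℕ) (hn : 0 < n) (hco : Nat.Coprime m n)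
    (ω : ℤ → ℤ) (hbij : Function.Bijective ω)
    (hper : ∀ i : ℤ, ω (i + n) = ω i + n) :
    (∀ x : ℤ, ω x < ω (x + m)) ↔
      ∃ a : Fin n → ℤ,
        (∀ i j : Fin n, a i - a j ≤ m) ∧
        (∀ i j : Fin n, a i - a j = m → i < j) ∧
        (∀ i : Fin n, ω (-(n : ℤ) * a i + m * ((gvalZ n a i : ℤ) - 1)) = (i : ℤ) + 1) := by
  have hgval : ∀ (a : Fin n → ℤ) i, (gvalZ n a i : ℤ) - 1 = rank (sortKey a) i := by
    intro a i
    rw [gvalZ_eq_rank_add_one]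
    push_cast
    ring
  simp only [hgval]
  constructor
  · intro hst
    obtain ⟨a, ha⟩ := exists_sortKey_of_stable hco hn hper hbij.2 hst
    obtain ⟨hle, hlt⟩ :=
      (sortKey_lt_add_mul_iff a m).1 ((stable_iff_sortKey_lt_add_mul hco hn hper ha).1 hst)
    exact ⟨a, hle, hlt, ha⟩
  · rintro ⟨a, hle, hlt, ha⟩
    exact (stable_iff_sortKey_lt_add_mul hco hn hper ha).2
      ((sortKey_lt_add_mul_iff a m).2 ⟨hle, hlt⟩)

/-- For coprime positive `m, n`, an affine permutation `ω` is
`m`-stable iff `ω⁻¹(i) = −n·a_i + m·(g_a(i) − 1)` for `i = 1,…,n` for some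
`a ∈ ℤ^n` with `a_i − a_j ≤ m` for all `i, j`, and `i < j` whenever
`a_i − a_j = m`.  (The condition `ω(−n·a_i + m·(g_a(i)−1)) = i` expresses the
formula for `ω⁻¹`.) -/
theorem stmt_4 (m n : ℕ) (hm : 0 < m) (hn : 0 < n) (hco : Nat.Coprime m n)
    (ω : ℤ → ℤ) (hbij : Function.Bijective ω)
    (hper : ∀ i : ℤ, ω (i + n) = ω i + n) :
    (∀ x : ℤ, ω x < ω (x + m)) ↔
      ∃ a : Fin n → ℤ,
        (∀ i j : Fin n, a i - a j ≤ m) ∧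
        (∀ i j : Fin n, a i - a j = m → i < j) ∧
        (∀ i : Fin n, ω (-(n : ℤ) * a i + m * ((gvalZ n a i : ℤ) - 1)) = (i : ℤ) + 1) :=
  stmt_4_general m n hn hco ω hbij hper
end

section
/- For a, b ∈ ℤ_{≥0}^n with ||a|| = ||b||, one has a ≺ b in the recursive partial order on P_k(n) if and only if the window notation of w_a is lexicographically greater than that of w_b. -/
/-! The window of `w_a` is the increasing rearrangement of the values `i + 1 + n a_i`, and each
clause generating `≺` acts transparently on it: `π` adds `1` to every value; prepending `0`
puts the value `1` in front and moves the other values by a strictly increasing map; and a list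
with positive first entry has no window value `1`. So every generating step `a ≺ b` makes the
window of `b` lexicographically smaller than that of `a`. Conversely, `≺` is total on lists of
equal length and sum, while the lexicographic order is asymmetric. -/

/-- Rank of `(x,y)` in the explicit base ordering of `P_k(2)`. -/
def rank2 (x y : ℕ) : ℕ := if y < x then x - y - 1 else y - x

/-- `π·(a_1,…,a_n) = (a_n + 1, a_1, …, a_{n−1})` on lists. -/
def piL (l : List ℕ) : List ℕ := (l.getLast?.getD 0 + 1) :: l.dropLast

/-- The recursive linear order `≺` of the paper on `P_k(n)`, as an inductively
generated relation (base case `n = 2`; for `n ≥ 3`, `P_{k+1}(n)` is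
`π(P_k(n))` with transported order, followed by `{a : a_1 = 0} ≅ P_{k+1}(n−1)`). -/
inductive Prec : List ℕ → List ℕ → Prop where
  | base (x y u v : ℕ) (hs : x + y = u + v) (hr : rank2 x y < rank2 u v) :
      Prec [x, y] [u, v]
  | pi (a b : List ℕ) (h3 : 3 ≤ a.length) (h : Prec a b) : Prec (piL a) (piL b)
  | mixed (x : ℕ) (a b : List ℕ) (hl : a.length = b.length) (h2 : 2 ≤ a.length)
      (hsum : x + 1 + a.sum = b.sum) : Prec ((x + 1) :: a) (0 :: b)
  | zero (a b : List ℕ) (h2 : 2 ≤ a.length) (h : Prec a b) : Prec (0 :: a) (0 :: b)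

/-- The window of `w_a = t_a ∘ g_a⁻¹`: the increasing rearrangement of the
values `i + n·a_i` (1-based, `n = ` length of `a`). -/
def winL (l : List ℕ) : List ℤ :=
  List.insertionSort (· ≤ ·)
    ((List.range l.length).map fun (i : ℕ) => ((i : ℤ) + 1) + (l.length : ℤ) * (l.getD i 0 : ℤ))

open List

theorem List.Lex.map {α β : Type*} {r : α → α → Prop} {s : β → β → Prop} {f : α → β}
    (hf : ∀ a b, r a b → s (f a) (f b)) {u v : List α} (h : Lex r u v) :
    Lex s (u.map f) (v.map f) := by
  induction h with
  | nil => exact .nil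
  | cons _ ih => exact .cons ih
  | rel h => exact .rel (hf _ _ h)

def winValues (l : List ℕ) : List ℤ :=
  (range l.length).map fun i : ℕ => (i : ℤ) + 1 + l.length * l.getD i 0

lemma perm_winL (l : List ℕ) : winL l ~ winValues l := perm_insertionSort _ _

lemma pairwise_winL (l : List ℕ) : (winL l).Pairwise (· ≤ ·) := pairwise_insertionSort _ _

lemma length_winL (l : List ℕ) : (winL l).length = l.length := by
  rw [(perm_winL l).length_eq, winValues, length_map, length_range]

lemma winL_eq_of_perm {l : List ℕ} {L : List ℤ} (hL : L.Pairwise (· ≤ ·))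
    (hp : L ~ winValues l) : winL l = L :=
  ((perm_winL l).trans hp.symm).eq_of_pairwise' (pairwise_winL l) hL

lemma one_le_of_mem_winL {l : List ℕ} {v : ℤ} (hv : v ∈ winL l) : 1 ≤ v := by
  obtain ⟨i, -, rfl⟩ := List.mem_map.mp ((perm_winL l).mem_iff.mp hv)
  have : (0 : ℤ) ≤ l.length * l.getD i 0 := by positivity
  linarith [Int.natCast_nonneg i]

lemma winValues_cons (x : ℕ) (l : List ℕ) :
    winValues (x :: l) = (1 + (l.length + 1) * x : ℤ) ::
      (range l.length).map fun i : ℕ => (i : ℤ) + 2 + (l.length + 1) * l.getD i 0 := by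
  simp only [winValues, length_cons, range_succ_eq_map, map_cons, map_map]
  refine congrArg₂ _ (by simp) (map_congr_left fun i _ => ?_)
  simp only [Function.comp_apply, getD_cons_succ]
  push_cast; ring

lemma winValues_concat (l : List ℕ) (x : ℕ) :
    winValues (l ++ [x]) =
      (range l.length).map (fun i : ℕ => (i : ℤ) + 1 + (l.length + 1) * l.getD i 0)
        ++ [(l.length + 1 + (l.length + 1) * x : ℤ)] := by
  simp only [winValues, length_append, length_singleton, range_succ, map_append, map_cons, map_nil]
  congr 1
  · refine map_congr_left fun i hi => ?_
    rw [getD_append _ _ _ _ (mem_range.mp hi)]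
    push_cast; ring
  · simp

lemma winL_succ_cons (x : ℕ) (l : List ℕ) :
    winL ((x + 1) :: l) = (winL (l ++ [x])).map (· + 1) := by
  refine winL_eq_of_perm ((pairwise_winL _).map _ fun _ _ h => by linarith) ?_
  refine ((perm_winL _).map _).trans ?_
  rw [winValues_concat, winValues_cons, map_append, map_map]
  refine (perm_append_singleton _ _).trans (Perm.of_eq ?_)
  congr 1
  · push_cast; ring
  · exact map_congr_left fun i _ => by simp only [Function.comp_apply]; ring

lemma piL_concat (l : List ℕ) (x : ℕ) : piL (l ++ [x]) = (x + 1) :: l := by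
  simp [piL]

lemma length_piL {l : List ℕ} (h : l ≠ []) : (piL l).length = l.length := by
  rw [← dropLast_concat_getLast h, piL_concat, length_cons, length_append, length_singleton]

lemma winL_piL {l : List ℕ} (h : l ≠ []) : winL (piL l) = (winL l).map (· + 1) := by
  rw [← dropLast_concat_getLast h, piL_concat, winL_succ_cons]

/-- Prepending `0` to a list of length `m` turns its window value `i + 1 + m x` (`i < m`) into
`i + 2 + (m + 1) x`. -/
def zeroConsMap (m : ℕ) (v : ℤ) : ℤ := v + 1 + (v - 1) / m

lemma strictMono_zeroConsMap (m : ℕ) : StrictMono (zeroConsMap m) := fun v w h => by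
  have : (v - 1) / m ≤ (w - 1) / m := by
    rcases Nat.eq_zero_or_pos m with rfl | hm
    · simp
    · exact Int.ediv_le_ediv (by exact_mod_cast hm) (by linarith)
  unfold zeroConsMap; linarith

lemma zeroConsMap_apply {m i : ℕ} (hi : i < m) (x : ℤ) :
    zeroConsMap m (i + 1 + m * x) = i + 2 + (m + 1) * x := by
  have : ((i : ℤ) + 1 + m * x - 1) / m = x := by
    rw [show (i : ℤ) + 1 + m * x - 1 = i + m * x by ring, Int.add_mul_ediv_left _ _ (by omega),
      Int.ediv_eq_zero_of_lt (by omega) (by omega), zero_add]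
  rw [zeroConsMap, this]; ring

lemma winL_zero_cons (l : List ℕ) :
    winL (0 :: l) = 1 :: (winL l).map (zeroConsMap l.length) := by
  have hmono := (strictMono_zeroConsMap l.length).monotone
  refine winL_eq_of_perm (pairwise_cons.mpr
    ⟨fun v hv => ?_, (pairwise_winL l).map _ fun _ _ h => hmono h⟩) ?_
  · obtain ⟨w, hw, rfl⟩ := mem_map.mp hv
    have := one_le_of_mem_winL hw
    have := Int.ediv_nonneg (by linarith : 0 ≤ w - 1) (Int.natCast_nonneg l.length)
    unfold zeroConsMap; linarith
  rw [winValues_cons]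
  refine Perm.cons _ (((perm_winL l).map _).trans (Perm.of_eq ?_))
  simp only [winValues, map_map]
  exact map_congr_left fun i hi => by
    simpa using zeroConsMap_apply (mem_range.mp hi) (l.getD i 0)

lemma winL_pair (x y : ℕ) :
    winL [x, y] =
      if x ≤ y then [1 + 2 * (x : ℤ), 2 + 2 * y] else [2 + 2 * (y : ℤ), 1 + 2 * x] := by
  simp only [winL, length_cons, length_nil, range_succ, range_zero, nil_append, cons_append,
    map_cons, map_nil, insertionSort]
  split_ifs <;> simp <;> omega

lemma lex_winL_pair {x y u v : ℕ} (hs : x + y = u + v) (hr : rank2 x y < rank2 u v) :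
    Lex (· < ·) (winL [u, v]) (winL [x, y]) := by
  rw [winL_pair, winL_pair]
  unfold rank2 at hr
  split_ifs at hr ⊢ <;> simp only [cons_lex_cons_iff] <;> omega

lemma Prec.length_eq {a b : List ℕ} (h : Prec a b) : a.length = b.length := by
  induction h with
  | base => rfl
  | pi a b h3 _ ih =>
    rw [length_piL (ne_nil_of_length_pos (by omega)), length_piL (ne_nil_of_length_pos (by omega)),
      ih]
  | mixed _ _ _ hl => simp [hl]
  | zero _ _ _ _ ih => simp [ih]

lemma winL_zero_cons_lex_winL_succ_cons (x : ℕ) (a b : List ℕ) :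
    Lex (· < ·) (winL (0 :: b)) (winL ((x + 1) :: a)) := by
  obtain ⟨z, zs, hz⟩ :=
    exists_cons_of_length_pos (l := winL (a ++ [x])) (by simp [length_winL])
  rw [winL_zero_cons, winL_succ_cons, hz, map_cons]
  exact .rel (by linarith [one_le_of_mem_winL (hz ▸ mem_cons_self : z ∈ winL (a ++ [x]))])

lemma Prec.lex_winL {a b : List ℕ} (h : Prec a b) : Lex (· < ·) (winL b) (winL a) := by
  induction h with
  | base x y u v hs hr => exact lex_winL_pair hs hr
  | pi a b h3 h ih =>
    rw [winL_piL (l := a) (ne_nil_of_length_pos (by omega)),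
      winL_piL (l := b) (ne_nil_of_length_pos (by rw [← h.length_eq]; omega))]
    exact ih.map fun _ _ h => by linarith
  | mixed x a b => exact winL_zero_cons_lex_winL_succ_cons x a b
  | zero a b _ h ih =>
    rw [winL_zero_cons, winL_zero_cons, h.length_eq]
    exact .cons (ih.map fun _ _ => (strictMono_zeroConsMap _ ·))

lemma Prec.trichotomous_pair {x y u v : ℕ} (hs : x + y = u + v) :
    Prec [x, y] [u, v] ∨ [x, y] = [u, v] ∨ Prec [u, v] [x, y] := by
  rcases lt_trichotomy (rank2 x y) (rank2 u v) with hr | hr | hr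
  · exact .inl (.base x y u v hs hr)
  · right; left
    unfold rank2 at hr
    split_ifs at hr <;> simp only [cons.injEq, and_true] <;> omega
  · exact .inr (.inr (.base u v x y hs.symm hr))

theorem Prec.trichotomous {a b : List ℕ} (hl : a.length = b.length) (hs : a.sum = b.sum)
    (h2 : 2 ≤ a.length) : Prec a b ∨ a = b ∨ Prec b a := by
  induction hN : a.sum + a.length using Nat.strong_induction_on generalizing a b with
  | _ N ih =>
  rcases (by omega : a.length = 2 ∨ 3 ≤ a.length) with hlen2 | h3
  · obtain ⟨x, y, rfl⟩ := length_eq_two.mp hlen2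
    obtain ⟨u, v, rfl⟩ := length_eq_two.mp (hl ▸ hlen2)
    exact Prec.trichotomous_pair (by simpa using hs)
  obtain ⟨_ | x, a, rfl⟩ := exists_cons_of_length_pos (l := a) (by omega)
  all_goals obtain ⟨_ | y, b, rfl⟩ := exists_cons_of_length_pos (l := b) (by omega)
  all_goals simp only [length_cons, sum_cons] at hl hs h3 hN
  · rcases ih (a.sum + a.length) (by omega) (a := a) (b := b) (by omega) (by omega) (by omega) rfl
      with h | h | h
    · exact .inl (.zero _ _ (by omega) h)
    · exact .inr (.inl (congrArg _ h))
    · exact .inr (.inr (.zero _ _ (by omega) h))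
  · exact .inr (.inr (.mixed y b a (by omega) (by omega) (by omega)))
  · exact .inl (.mixed x a b (by omega) (by omega) (by omega))
  · rcases ih ((a ++ [x]).sum + (a ++ [x]).length) (by simp; omega) (a := a ++ [x])
      (b := b ++ [y]) (by simp; omega) (by simp; omega) (by simp; omega) rfl with h | h | h
    · exact .inl (by simpa only [piL_concat] using Prec.pi _ _ (by simp; omega) h)
    · exact .inr (.inl (by simpa only [piL_concat] using congrArg piL h))
    · exact .inr (.inr (by simpa only [piL_concat] using Prec.pi _ _ (by simp; omega) h))

lemma List.eq_of_length_le_one {α : Type*} [AddMonoid α] {a b : List α}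
    (hl : a.length = b.length) (hs : a.sum = b.sum) (h1 : a.length ≤ 1) : a = b :=
  match a, b, hl with
  | [], [], _ => rfl
  | [_], [_], _ => by simpa using hs
  | _ :: _ :: _, _, _ => by simp at h1

/-- for `a, b ∈ ℤ_{≥0}^n` with `‖a‖ = ‖b‖`, `a ≺ b` in the
recursive order iff the window of `w_a` is lexicographically greater than the
window of `w_b`. -/
theorem stmt_12 (a b : List ℕ) (hl : a.length = b.length) (hs : a.sum = b.sum) :
    Prec a b ↔ List.Lex (· < ·) (winL b) (winL a) := by
  refine ⟨Prec.lex_winL, fun h => ?_⟩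
  have h2 : 2 ≤ a.length := by
    by_contra! h1
    obtain rfl := eq_of_length_le_one hl hs (by omega)
    exact asymm h h
  rcases Prec.trichotomous hl hs h2 with hab | rfl | hba
  · exact hab
  · exact absurd h (asymm h)
  · exact absurd h (asymm hba.lex_winL)
end
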